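/- For every k ∈ {1,…,d}, the polynomial z_k² − 1 belongs to the ideal of ℝ[z₁,…,z_d] generated by the polynomials q_Θ, where Θ ranges over all d×d integer matrices each of whose columns is a 0-1 vector with exactly one or exactly two entries equal to 1, such that det Θ = ±1 and at least one column of Θ equals the k-th standard unit vector e_k. -/

import Mathlib

/-!
Write `y = z_k`. Let `w` fix `k` and send every other index `c` to `c`, to `k`, or to an index
larger than `c`. The matrix whose column `c` is the indicator of `{c, w c}` is unitriangular once
`k` is ordered last, so `2^d q_Θ = ∏_c (1 + ∏_{j ∈ {c, w c}} z_j)` lies in the ideal. Its factor at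
`c = k` is `1 + y`, so it suffices that `2^(d-1) (y - 1)` lies in the ideal generated by the
products of the remaining factors. This goes by induction on the set `T` of remaining columns:
`y (1 + z_a) - (1 + z_a y) = y - 1` disposes of a single column, and for `a < b` in `T` the identity
`(1 + z_a z_b) + (1 + z_b) - z_b (1 + z_a) = 2` combines the cases `T \ {a}` and `T \ {b}`.
-/

open MvPolynomial

/-- For a `d×d` integer matrix `Θ` with 0-1 columns, the polynomial
`q_Θ(z) = ∏_{columns θ of Θ} (1 + z^θ)/2`, where `z^θ = z₁^{θ₁}⋯z_d^{θ_d}`. -/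
noncomputable def qpoly {d : ℕ} (Θ : Matrix (Fin d) (Fin d) ℤ) : MvPolynomial (Fin d) ℝ :=
  ∏ c : Fin d, (C (1 / 2 : ℝ) * (1 + ∏ i : Fin d, X i ^ (Θ i c).toNat))

open Finset

theorem Matrix.BlockTriangular.det_of_injective {m α R : Type*} [Fintype m] [DecidableEq m]
    [CommRing R] [LinearOrder α] {M : Matrix m m R} {b : m → α} (hM : M.BlockTriangular b)
    (hb : Function.Injective b) : M.det = ∏ i, M i i := by
  rw [hM.det, prod_image fun i _ j _ h => hb h]
  refine prod_congr rfl fun i _ => ?_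
  have : Subsingleton {j // b j = b i} := ⟨fun j j' => Subtype.ext (hb (j.2.trans j'.2.symm))⟩
  exact Matrix.det_eq_elem_of_subsingleton _ (⟨i, rfl⟩ : {j // b j = b i})

theorem Ideal.mul_mem_of_mem_span {R : Type*} [CommRing R] {I : Ideal R} {G : Set R} {c p : R}
    (hG : ∀ q ∈ G, c * q ∈ I) (hp : p ∈ Ideal.span G) : c * p ∈ I := by
  induction hp using Submodule.span_induction with
  | mem q hq => exact hG q hq
  | zero => simp
  | add q r _ _ hq hr => rw [mul_add]; exact add_mem hq hr
  | smul r q _ hq => rw [smul_eq_mul, mul_left_comm]; exact I.mul_mem_left r hq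

section ForestProducts

variable {ι R : Type*} [CommRing R]

def edgeFactor [DecidableEq ι] (x : ι → R) (w : ι → ι) (i : ι) : R := 1 + ∏ j ∈ {i, w i}, x j

variable [LinearOrder ι]

def forestProducts (x : ι → R) (k : ι) (T : Finset ι) : Set R :=
  {p | ∃ w : ι → ι, (∀ i ∈ T, w i = i ∨ w i = k ∨ i < w i) ∧ p = ∏ i ∈ T, edgeFactor x w i}

variable {x : ι → R} {k : ι} {T : Finset ι}

lemma one_mem_span_forestProducts_empty : (1 : R) ∈ Ideal.span (forestProducts x k ∅) :=
  Ideal.subset_span ⟨id, by simp, by simp⟩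

lemma mul_mem_forestProducts {a v : ι} (ha : a ∈ T) (hv : v = a ∨ v = k ∨ a < v) {p : R}
    (hp : p ∈ forestProducts x k (T.erase a)) :
    (1 + ∏ j ∈ {a, v}, x j) * p ∈ forestProducts x k T := by
  obtain ⟨w, hw, rfl⟩ := hp
  refine ⟨Function.update w a v, fun i hi => ?_, ?_⟩
  · rcases eq_or_ne i a with rfl | hia
    · simpa using hv
    · simpa [hia] using hw i (mem_erase.2 ⟨hia, hi⟩)
  · rw [← mul_prod_erase T _ ha]
    congr 1
    · simp [edgeFactor]
    · exact prod_congr rfl fun i hi => by simp [edgeFactor, ne_of_mem_erase hi]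

lemma mul_mem_span_forestProducts {a v : ι} (ha : a ∈ T) (hv : v = a ∨ v = k ∨ a < v) {p : R}
    (hp : p ∈ Ideal.span (forestProducts x k (T.erase a))) :
    (1 + ∏ j ∈ {a, v}, x j) * p ∈ Ideal.span (forestProducts x k T) :=
  Ideal.mul_mem_of_mem_span (fun _ hq => Ideal.subset_span (mul_mem_forestProducts ha hv hq)) hp

lemma sub_one_mul_mem_span_forestProducts {a : ι} (ha : a ∈ T) (hak : a ≠ k) {p : R}
    (hp : p ∈ Ideal.span (forestProducts x k (T.erase a))) :
    (x k - 1) * p ∈ Ideal.span (forestProducts x k T) := by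
  have hloop := mul_mem_span_forestProducts ha (Or.inl rfl) hp
  have hedge := mul_mem_span_forestProducts ha (Or.inr (Or.inl rfl)) hp
  rw [pair_eq_singleton, prod_singleton] at hloop
  rw [prod_pair hak] at hedge
  have : (x k - 1) * p = x k * ((1 + x a) * p) - (1 + x a * x k) * p := by ring
  rw [this]
  exact sub_mem (Ideal.mul_mem_left _ _ hloop) hedge

lemma two_mul_mem_span_forestProducts {a b : ι} (ha : a ∈ T) (hb : b ∈ T) (hab : a < b) {p : R}
    (hpa : p ∈ Ideal.span (forestProducts x k (T.erase a)))
    (hpb : p ∈ Ideal.span (forestProducts x k (T.erase b))) :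
    2 * p ∈ Ideal.span (forestProducts x k T) := by
  have hloop_a := mul_mem_span_forestProducts ha (Or.inl rfl) hpa
  have hedge := mul_mem_span_forestProducts ha (Or.inr (Or.inr hab)) hpa
  have hloop_b := mul_mem_span_forestProducts hb (Or.inl rfl) hpb
  rw [pair_eq_singleton, prod_singleton] at hloop_a hloop_b
  rw [prod_pair hab.ne] at hedge
  have : 2 * p = (1 + x a * x b) * p + (1 + x b) * p - x b * ((1 + x a) * p) := by ring
  rw [this]
  exact sub_mem (add_mem hedge hloop_b) (Ideal.mul_mem_left _ _ hloop_a)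

theorem two_pow_card_mul_sub_one_mem_span_forestProducts (hk : k ∉ T) :
    2 ^ T.card * (x k - 1) ∈ Ideal.span (forestProducts x k T) := by
  induction T using Finset.strongInduction with | H T ih =>
  rcases T.eq_empty_or_nonempty with rfl | hne
  · rw [Ideal.eq_top_of_isUnit_mem _ one_mem_span_forestProducts_empty isUnit_one]
    exact Submodule.mem_top
  obtain ⟨a, rfl⟩ | hT := hne.exists_eq_singleton_or_nontrivial
  · have hak : a ≠ k := fun h => hk (h ▸ mem_singleton_self a)
    have := sub_one_mul_mem_span_forestProducts (mem_singleton_self a) hak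
      (by simpa using one_mem_span_forestProducts_empty (x := x) (k := k))
    simpa [mul_comm] using Ideal.mul_mem_left _ 2 this
  obtain ⟨a, ha, b, hb, hab⟩ := Set.Nontrivial.exists_lt hT
  rw [← card_erase_add_one ha, pow_succ', mul_assoc]
  refine two_mul_mem_span_forestProducts ha hb hab
    (ih _ (erase_ssubset ha) fun h => hk (mem_of_mem_erase h)) ?_
  rw [card_erase_of_mem ha, ← card_erase_of_mem hb]
  exact ih _ (erase_ssubset hb) fun h => hk (mem_of_mem_erase h)

end ForestProducts

section ForestMatrix

variable {ι : Type*}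

def forestMatrix [DecidableEq ι] (w : ι → ι) : Matrix ι ι ℤ :=
  fun i c => if i ∈ ({c, w c} : Finset ι) then 1 else 0

variable {k : ι} {w : ι → ι}

lemma forestMatrix_eq_zero_or_one [DecidableEq ι] (w : ι → ι) (i c : ι) :
    forestMatrix w i c = 0 ∨ forestMatrix w i c = 1 := by
  unfold forestMatrix; split_ifs <;> simp

lemma sum_forestMatrix [DecidableEq ι] [Fintype ι] (w : ι → ι) (c : ι) :
    ∑ i, forestMatrix w i c = 1 ∨ ∑ i, forestMatrix w i c = 2 := by
  simp only [forestMatrix, sum_boole, filter_mem_eq_inter, univ_inter]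
  rcases eq_or_ne c (w c) with h | h
  · simp [← h]
  · simp [card_pair h]

lemma forestMatrix_apply_of_fixed [DecidableEq ι] (hk : w k = k) (i : ι) :
    forestMatrix w i k = if i = k then 1 else 0 := by
  simp [forestMatrix, hk]

lemma det_forestMatrix [LinearOrder ι] [Fintype ι] (hk : w k = k) (hw : ∀ c ≠ k, w c = c ∨ w c = k ∨ c < w c) :
    (forestMatrix w).det = 1 := by
  let b : ι → (WithTop ι)ᵒᵈ := fun c => OrderDual.toDual (if c = k then ⊤ else c)
  have hb : Function.Injective b := fun c c' h => by
    simp only [b, OrderDual.toDual_inj] at h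
    split_ifs at h <;> simp_all
  have htri : (forestMatrix w).BlockTriangular b := by
    intro i c hlt
    simp only [forestMatrix, mem_insert, mem_singleton, ite_eq_right_iff, one_ne_zero, imp_false,
      not_or]
    refine ⟨fun h => (h ▸ hlt).ne rfl, fun h => ?_⟩
    subst h
    rcases eq_or_ne c k with rfl | hc
    · simp [hk] at hlt
    rcases hw c hc with h | h | h
    · simp [h] at hlt
    · simp [b, h, hc] at hlt
    · simp only [b, hc, if_false, OrderDual.toDual_lt_toDual] at hlt
      split_ifs at hlt
      · exact not_top_lt hlt
      · exact (WithTop.coe_lt_coe.1 hlt).not_gt h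
  rw [htri.det_of_injective hb]
  simp [forestMatrix]

end ForestMatrix

lemma qpoly_forestMatrix {d : ℕ} (w : Fin d → Fin d) :
    qpoly (forestMatrix w) = C (1 / 2 : ℝ) ^ d * ∏ c, edgeFactor X w c := by
  have hcol (c : Fin d) : ∏ i, (X i : MvPolynomial (Fin d) ℝ) ^ (forestMatrix w i c).toNat
      = ∏ i ∈ {c, w c}, X i := by
    rw [← univ_inter {c, w c}, ← prod_ite_mem]
    refine prod_congr rfl fun i _ => ?_
    unfold forestMatrix
    split_ifs <;> simp
  simp only [qpoly, hcol, prod_mul_distrib, prod_const, card_univ, Fintype.card_fin, edgeFactor]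

def unimodularQPolys {d : ℕ} (k : Fin d) : Set (MvPolynomial (Fin d) ℝ) :=
  {q | ∃ Θ : Matrix (Fin d) (Fin d) ℤ,
    (∀ i c, Θ i c = 0 ∨ Θ i c = 1) ∧
    (∀ c, (∑ i, Θ i c) = 1 ∨ (∑ i, Θ i c) = 2) ∧
    (Θ.det = 1 ∨ Θ.det = -1) ∧
    (∃ c, ∀ i, Θ i c = if i = k then 1 else 0) ∧
    q = qpoly Θ}

lemma one_add_X_mul_mem_span_unimodularQPolys {d : ℕ} {k : Fin d} {p : MvPolynomial (Fin d) ℝ}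
    (hp : p ∈ Ideal.span (forestProducts X k (univ.erase k))) :
    (1 + X k) * p ∈ Ideal.span (unimodularQPolys k) := by
  refine Ideal.mul_mem_of_mem_span (fun q hq => ?_) hp
  obtain ⟨w, hw, rfl⟩ := hq
  set w' := Function.update w k k
  have hw' : ∀ c ≠ k, w' c = c ∨ w' c = k ∨ c < w' c := fun c hc => by
    simpa [w', hc] using hw c (mem_erase.2 ⟨hc, mem_univ c⟩)
  have hmem : qpoly (forestMatrix w') ∈ unimodularQPolys k :=
    ⟨_, forestMatrix_eq_zero_or_one w', sum_forestMatrix w',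
      .inl (det_forestMatrix (by simp [w']) hw'), ⟨k, forestMatrix_apply_of_fixed (by simp [w'])⟩,
      rfl⟩
  have hroot : edgeFactor X w' k = (1 + X k : MvPolynomial (Fin d) ℝ) := by simp [edgeFactor, w']
  have hrest : ∏ c ∈ univ.erase k, edgeFactor X w' c
      = ∏ c ∈ univ.erase k, edgeFactor (X : Fin d → MvPolynomial (Fin d) ℝ) w c :=
    prod_congr rfl fun c hc => by
      simp only [edgeFactor, w', Function.update_of_ne (ne_of_mem_erase hc)]
  have hprod : (1 + X k) * ∏ c ∈ univ.erase k, edgeFactor X w c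
      = C (2 : ℝ) ^ d * qpoly (forestMatrix w') := by
    rw [qpoly_forestMatrix, ← mul_assoc, ← mul_pow, ← C_mul, ← mul_prod_erase _ _ (mem_univ k),
      hroot, hrest]
    norm_num
  rw [hprod]
  exact Ideal.mul_mem_left _ _ (Ideal.subset_span hmem)

/-- For every `k`, the polynomial `z_k² − 1` lies in the ideal generated by the `q_Θ`
where `Θ` ranges over `d×d` integer matrices whose columns are 0-1 vectors with exactly
one or two ones, with `det Θ = ±1`, and having `e_k` among their columns. -/
theorem stmt_2 (d : ℕ) (k : Fin d) :
    (X k ^ 2 - 1 : MvPolynomial (Fin d) ℝ) ∈ Ideal.span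
      {q : MvPolynomial (Fin d) ℝ | ∃ Θ : Matrix (Fin d) (Fin d) ℤ,
        (∀ i c, Θ i c = 0 ∨ Θ i c = 1) ∧
        (∀ c, (∑ i, Θ i c) = 1 ∨ (∑ i, Θ i c) = 2) ∧
        (Θ.det = 1 ∨ Θ.det = -1) ∧
        (∃ c, ∀ i, Θ i c = if i = k then 1 else 0) ∧
        q = qpoly Θ} := by
  show _ ∈ Ideal.span (unimodularQPolys k)
  have key := one_add_X_mul_mem_span_unimodularQPolys
    (two_pow_card_mul_sub_one_mem_span_forestProducts (notMem_erase k univ))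
  have hunit : IsUnit (2 ^ (univ.erase k).card : MvPolynomial (Fin d) ℝ) :=
    .pow _ (by rw [← map_ofNat C 2]; exact (IsUnit.mk0 (2 : ℝ) two_ne_zero).map C)
  refine (Ideal.unit_mul_mem_iff_mem _ hunit).mp ?_
  convert key using 1
  ring
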